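/- arXiv:1212.3582 — 2 statements merged into one kernel-verified Lean document; each statement's English description precedes it below -/
import Mathlib

section
/- Let P ∈ k[X,σ] be monic étale, such that the Jordan form of φ^r on D_P consists of a single Jordan block (dual type (a) for a single irreducible N). Then P admits a unique factorization as a product of monic irreducible skew polynomials. -/
/-- A ring `R` together with a ring embedding `ι : k →+* R` and an element `X : R` is
*the* skew polynomial ring `k[X,σ]` if `X * ι a = ι (σ a) * X` for all `a : k` and every
element of `R` can be written uniquely as a finite sum `∑ ι aᵢ * X ^ i`. -/
structure IsSkewPolyRing (k : Type*) [Field k] (σ : k ≃+* k)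
    (R : Type*) [Ring R] (ι : k →+* R) (X : R) : Prop where
  X_mul : ∀ a : k, X * ι a = ι (σ a) * X
  repr_unique : ∀ y : R, ∃! c : ℕ →₀ k, y = c.sum fun i a => ι a * X ^ i

namespace IsSkewPolyRing

variable {k : Type*} [Field k] {σ : k ≃+* k} {R : Type*} [Ring R] {ι : k →+* R} {X : R}

/-- The coefficients of a skew polynomial. -/
noncomputable def repr (h : IsSkewPolyRing k σ R ι X) (y : R) : ℕ →₀ k :=
  (h.repr_unique y).exists.choose

/-- `y` has degree at most `n`. -/
def degLE (h : IsSkewPolyRing k σ R ι X) (y : R) (n : ℕ) : Prop :=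
  ∀ i, n < i → h.repr y i = 0

/-- `y` is monic of degree `d`. -/
def MonicOfDegree (h : IsSkewPolyRing k σ R ι X) (y : R) (d : ℕ) : Prop :=
  h.repr y d = 1 ∧ h.degLE y d

/-- `y` is monic. -/
def Monic (h : IsSkewPolyRing k σ R ι X) (y : R) : Prop := ∃ d, h.MonicOfDegree y d

/-- The matrix of right multiplication by `P` on `k[X,σ]`, viewed as a free module of
rank `r` over `k[X^r]` (identified with `Polynomial k` via `X^r ↦ Y`), in the basis
`1, X, …, X^(r-1)`. -/
noncomputable def normMatrix (h : IsSkewPolyRing k σ R ι X) (r : ℕ) (P : R) :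
    Matrix (Fin r) (Fin r) (Polynomial k) :=
  fun l j => ∑ i ∈ (h.repr P).support,
    if (i + (j : ℕ)) % r = (l : ℕ) then
      Polynomial.monomial ((i + (j : ℕ)) / r) ((σ ^ (j : ℕ)) (h.repr P i))
    else 0

/-- The reduced norm of a skew polynomial `P`: the determinant of right multiplication
by `P` on `k[X,σ]` viewed as a free `k[X^r]`-module of rank `r`, written as a
(commutative) polynomial in the variable `X^r`. -/
noncomputable def norm (h : IsSkewPolyRing k σ R ι X) (r : ℕ) (P : R) : Polynomial k :=
  (h.normMatrix r P).det

end IsSkewPolyRing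

/-- The fixed subfield `k^σ` of an automorphism `σ` of `k`. -/
def fixedSubfield {k : Type*} [Field k] (σ : k ≃+* k) : Subfield k where
  carrier := {a | σ a = a}
  mul_mem' := by intro a b ha hb; simp_all [Set.mem_setOf_eq]
  one_mem' := map_one σ
  add_mem' := by intro a b ha hb; simp_all [Set.mem_setOf_eq]
  zero_mem' := map_zero σ
  neg_mem' := by intro a ha; simp_all [Set.mem_setOf_eq]
  inv_mem' := by intro a ha; simp_all [Set.mem_setOf_eq]

/-- The element of `k[X,σ]` corresponding to a commutative polynomial with
coefficients in the fixed field `k^σ`, via the substitution `Y ↦ X^r`; these are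
exactly the elements of `k^σ[X^r]`. -/
noncomputable def centralElt {k : Type*} [Field k] (σ : k ≃+* k)
    {R : Type*} [Ring R] (ι : k →+* R) (X : R) (r : ℕ)
    (f : Polynomial (fixedSubfield σ)) : R :=
  Polynomial.eval₂ (ι.comp (fixedSubfield σ).subtype) (X ^ r) f

/-!
A right divisor `T` of `P` gives the `k[X,σ]`-submodule `k[X,σ]T/k[X,σ]P` of `D_P`, which
is a `φ^r`-stable `k^σ`-subspace, and inclusion of these submodules forces right divisibility.
If `φ^r` is a single Jordan block, then `D_P` is a cyclic `k^σ[Y]`-module killed by a power of an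
irreducible polynomial, so its `φ^r`-stable subspaces form a chain. Hence the right divisors of `P`
are totally ordered by right divisibility. In two factorizations `P = Q T = Q' T'` into monic
irreducibles, `T = A T'` (say) gives `Q' = Q A`, so `A` is a unit and, by monicity, `T = T'` and
`Q = Q'`; induction on the length finishes. Existence is induction on the degree.
-/

section CyclicEndomorphism

open Polynomial Module

theorem Ideal.le_total_of_pow_mem {A : Type*} [CommRing A] [IsDomain A] [IsPrincipalIdealRing A]
    {g : A} (hg : Prime g) {a : ℕ} {I J : Ideal A} (hI : g ^ a ∈ I) (hJ : g ^ a ∈ J) :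
    I ≤ J ∨ J ≤ I := by
  have prime_pow_gen : ∀ K : Ideal A, g ^ a ∈ K → ∃ j, K = Ideal.span {g ^ j} := by
    intro K hK
    obtain ⟨c, rfl⟩ := IsPrincipalIdealRing.principal K
    obtain ⟨j, -, hj⟩ := (dvd_prime_pow hg a).mp (Ideal.mem_span_singleton.mp hK)
    exact ⟨j, Ideal.span_singleton_eq_span_singleton.mpr hj⟩
  obtain ⟨i, rfl⟩ := prime_pow_gen I hI
  obtain ⟨j, rfl⟩ := prime_pow_gen J hJ
  simp only [Ideal.span_singleton_le_span_singleton]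
  exact (le_total j i).imp (pow_dvd_pow g) (pow_dvd_pow g)

theorem Submodule.le_total_of_span_singleton_eq_top {A M : Type*} [CommRing A] [IsDomain A]
    [IsPrincipalIdealRing A] [AddCommGroup M] [Module A M] {x : M} (hx : span A {x} = ⊤)
    {g : A} (hg : Prime g) {a : ℕ} (hgx : g ^ a • x = 0) (N₁ N₂ : Submodule A M) :
    N₁ ≤ N₂ ∨ N₂ ≤ N₁ := by
  set φ := LinearMap.toSpanSingleton A M x
  have hφ : Function.Surjective φ := by
    rw [← LinearMap.range_eq_top, LinearMap.range_toSpanSingleton, hx]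
  have hmem : ∀ N : Submodule A M, g ^ a ∈ N.comap φ := fun N => by
    simp [φ, hgx]
  rw [← map_comap_eq_of_surjective hφ N₁, ← map_comap_eq_of_surjective hφ N₂]
  exact (Ideal.le_total_of_pow_mem hg (hmem N₁) (hmem N₂)).imp (map_mono ·) (map_mono ·)

theorem Module.End.exists_span_singleton_eq_top_of_minpoly_eq_charpoly {F M : Type*} [Field F]
    [AddCommGroup M] [Module F M] [FiniteDimensional F M] (ψ : Module.End F M)
    (hmin : minpoly F ψ = ψ.charpoly) :
    ∃ x : AEval' ψ, Submodule.span F[X] {x} = ⊤ := by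
  obtain ⟨x, hx⟩ := exists_ker_toSpanSingleton_eq_annihilator F[X] (AEval' ψ)
  rw [← span_minpoly_eq_annihilator] at hx
  refine ⟨x, ?_⟩
  -- `x` has annihilator `(minpoly F ψ)`, so `p ↦ p • x` is injective on polynomials of degree
  -- `< finrank F M`, hence onto by counting dimensions.
  set n := finrank F M
  set Φ := (LinearMap.toSpanSingleton F[X] _ x).restrictScalars F ∘ₗ (degreeLT F n).subtype
  have hdeg : (minpoly F ψ).degree = n := by
    rw [hmin, degree_eq_natDegree ψ.charpoly_monic.ne_zero, LinearMap.charpoly_natDegree]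
  have hinj : Function.Injective Φ := by
    rw [← LinearMap.ker_eq_bot, LinearMap.ker_eq_bot']
    rintro ⟨p, hp⟩ hΦp
    have hker : p ∈ LinearMap.ker (LinearMap.toSpanSingleton F[X] _ x) := hΦp
    rw [hx, Ideal.mem_span_singleton] at hker
    rw [mem_degreeLT, ← hdeg] at hp
    exact Subtype.ext (eq_zero_of_dvd_of_degree_lt hker hp)
  have hsurj : Function.Surjective Φ := by
    rwa [← LinearMap.injective_iff_surjective_of_finrank_eq_finrank]
    rw [(degreeLTEquiv F n).finrank_eq, finrank_fin_fun, (AEval'.of ψ).symm.finrank_eq]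
  rw [← LinearMap.range_toSpanSingleton, LinearMap.range_eq_top]
  intro y
  obtain ⟨p, hp⟩ := hsurj y
  exact ⟨p, hp⟩

theorem Module.End.le_total_of_charpoly_eq_pow {F M : Type*} [Field F]
    [AddCommGroup M] [Module F M] [FiniteDimensional F M] (ψ : Module.End F M) {g : F[X]}
    (hg : Irreducible g) {a : ℕ} (hchar : ψ.charpoly = g ^ a)
    (hmin : minpoly F ψ = ψ.charpoly) {N₁ N₂ : Submodule F M}
    (h₁ : N₁ ∈ ψ.invtSubmodule) (h₂ : N₂ ∈ ψ.invtSubmodule) : N₁ ≤ N₂ ∨ N₂ ≤ N₁ := by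
  obtain ⟨x, hx⟩ := ψ.exists_span_singleton_eq_top_of_minpoly_eq_charpoly hmin
  have hgx : g ^ a • x = 0 := by
    have : minpoly F ψ ∈ annihilator F[X] (AEval' ψ) := by
      rw [← span_minpoly_eq_annihilator]; exact Ideal.mem_span_singleton_self _
    rw [← hchar, ← hmin]; exact Module.mem_annihilator.mp this x
  let e := AEval.mapSubmodule F M ψ
  have := Submodule.le_total_of_span_singleton_eq_top hx hg.prime hgx (e ⟨N₁, h₁⟩) (e ⟨N₂, h₂⟩)
  rwa [e.le_iff_le, e.le_iff_le] at this

theorem Submodule.le_total_of_charpoly_eq_pow {F R M : Type*} [Field F] [Ring R] [Module F R]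
    [AddCommGroup M] [Module R M] [Module F M] [IsScalarTower F R M] [FiniteDimensional F M]
    (ψ : Module.End F M) (z : R) (hψ : ∀ m, ψ m = z • m) {g : F[X]} (hg : Irreducible g)
    {a : ℕ} (hchar : ψ.charpoly = g ^ a) (hmin : minpoly F ψ = ψ.charpoly)
    (N₁ N₂ : Submodule R M) : N₁ ≤ N₂ ∨ N₂ ≤ N₁ := by
  have hinv (N : Submodule R M) : N.restrictScalars F ∈ ψ.invtSubmodule :=
    (Module.End.mem_invtSubmodule ψ).mpr fun m hm => by
      simpa [hψ m] using N.smul_mem z hm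
  simpa using ψ.le_total_of_charpoly_eq_pow hg hchar hmin (hinv N₁) (hinv N₂)

end CyclicEndomorphism

theorem exists_eq_mul_of_span_singleton_mk_le {R : Type*} [Ring R] {P T T' C : R} (hC : P = C * T')
    (hle : Submodule.span R {(Submodule.Quotient.mk T : R ⧸ (Ideal.span {P} : Ideal R))} ≤
      Submodule.span R {Submodule.Quotient.mk T'}) :
    ∃ A, T = A * T' := by
  obtain ⟨c, hc⟩ := Submodule.mem_span_singleton.mp (hle (Submodule.mem_span_singleton_self _))
  rw [← Submodule.Quotient.mk_smul, Submodule.Quotient.eq, smul_eq_mul] at hc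
  obtain ⟨d, hd⟩ := Ideal.mem_span_singleton'.mp hc
  exact ⟨c - d * C, by rw [sub_mul, mul_assoc, ← hC, hd, sub_sub_cancel]⟩

section UniqueFactorization

variable {M₀ : Type*} [MonoidWithZero M₀] [IsCancelMulZero M₀] {S : Submonoid M₀}

theorem eq_of_mul_eq_mul_of_eq_mul
    (hS : ∀ T ∈ S, ∀ T' ∈ S, ∀ u, IsUnit u → T = u * T' → T = T')
    {Q₁ Q₂ T₁ T₂ A : M₀} (hQ₁ : ¬IsUnit Q₁) (hQ₂ : Irreducible Q₂) (hT₁ : T₁ ∈ S)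
    (hT₂ : T₂ ∈ S) (hT₂0 : T₂ ≠ 0) (heq : Q₁ * T₁ = Q₂ * T₂) (hA : T₁ = A * T₂) : T₁ = T₂ := by
  have hQ : Q₂ = Q₁ * A := mul_right_cancel₀ hT₂0 (by rw [← heq, hA, mul_assoc])
  exact hS _ hT₁ _ hT₂ A ((hQ₂.isUnit_or_isUnit hQ).resolve_left hQ₁) hA

theorem List.eq_of_prod_eq_of_rightDvd_total
    (hS : ∀ T ∈ S, ∀ T' ∈ S, ∀ u, IsUnit u → T = u * T' → T = T') {P : M₀} (hP : P ≠ 0)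
    (htotal : ∀ T T' : M₀, (∃ C, P = C * T) → (∃ C, P = C * T') →
      (∃ A, T = A * T') ∨ ∃ A, T' = A * T)
    {L L' : List M₀} (hL : ∀ Q ∈ L, Q ∈ S ∧ Irreducible Q)
    (hL' : ∀ Q ∈ L', Q ∈ S ∧ Irreducible Q) (hLP : L.prod = P) (hL'P : L'.prod = P) :
    L = L' := by
  induction L generalizing L' P with
  | nil =>
    obtain _ | ⟨Q', t'⟩ := L'
    · rfl
    rw [List.prod_nil] at hLP
    rw [List.prod_cons, ← hLP] at hL'P
    exact ((hL' Q' List.mem_cons_self).2.not_isUnit (.of_mul_eq_one _ hL'P)).elim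
  | cons Q t ih =>
    obtain _ | ⟨Q', t'⟩ := L'
    · rw [List.prod_nil] at hL'P
      rw [List.prod_cons, ← hL'P] at hLP
      exact ((hL Q List.mem_cons_self).2.not_isUnit (.of_mul_eq_one _ hLP)).elim
    rw [List.prod_cons] at hLP hL'P
    have hQ := hL Q List.mem_cons_self
    have hQ' := hL' Q' List.mem_cons_self
    have ht := fun U hU => hL U (List.mem_cons_of_mem Q hU)
    have ht' := fun U hU => hL' U (List.mem_cons_of_mem Q' hU)
    have hT : t.prod ∈ S := S.list_prod_mem fun U hU => (ht U hU).1
    have hT' : t'.prod ∈ S := S.list_prod_mem fun U hU => (ht' U hU).1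
    have hT0 : t.prod ≠ 0 := right_ne_zero_of_mul (hLP ▸ hP)
    have hT'0 : t'.prod ≠ 0 := right_ne_zero_of_mul (hL'P ▸ hP)
    have heq : Q * t.prod = Q' * t'.prod := hLP.trans hL'P.symm
    have hTT' : t.prod = t'.prod := by
      rcases htotal _ _ ⟨Q, hLP.symm⟩ ⟨Q', hL'P.symm⟩ with ⟨A, hA⟩ | ⟨A, hA⟩
      · exact eq_of_mul_eq_mul_of_eq_mul hS hQ.2.not_isUnit hQ'.2 hT hT' hT'0 heq hA
      · exact (eq_of_mul_eq_mul_of_eq_mul hS hQ'.2.not_isUnit hQ.2 hT' hT hT0 heq.symm hA).symm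
    have hQQ' : Q = Q' := mul_right_cancel₀ hT0 (by rw [heq, hTT'])
    refine hQQ' ▸ congrArg _ (ih hT0 (fun U U' ⟨C, hC⟩ ⟨C', hC'⟩ => ?_) ht ht' rfl hTT'.symm)
    exact htotal U U' ⟨Q * C, by rw [← hLP, hC, mul_assoc]⟩ ⟨Q * C', by rw [← hLP, hC', mul_assoc]⟩

end UniqueFactorization

namespace IsSkewPolyRing

variable {k : Type*} [Field k] {σ : k ≃+* k} {R : Type*} [Ring R] {ι : k →+* R} {X : R}

noncomputable def ofCoeffs (ι : k →+* R) (X : R) : (ℕ →₀ k) →+ R :=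
  Finsupp.liftAddHom fun i => (AddMonoidHom.mulRight (X ^ i)).comp ι.toAddMonoidHom

theorem ofCoeffs_apply (c : ℕ →₀ k) : ofCoeffs ι X c = c.sum fun i a => ι a * X ^ i :=
  Finsupp.liftAddHom_apply _ _

theorem ofCoeffs_single (i : ℕ) (a : k) : ofCoeffs ι X (Finsupp.single i a) = ι a * X ^ i :=
  Finsupp.liftAddHom_apply_single _ _ _

theorem X_pow_mul_iota (h : IsSkewPolyRing k σ R ι X) (n : ℕ) (a : k) :
    X ^ n * ι a = ι ((σ ^ n) a) * X ^ n := by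
  induction n generalizing a with
  | zero => simp
  | succ n ih =>
    rw [pow_succ, mul_assoc, h.X_mul, ← mul_assoc, ih, mul_assoc, ← pow_succ, pow_succ σ]
    rfl

variable (h : IsSkewPolyRing k σ R ι X)

theorem ofCoeffs_repr (y : R) : ofCoeffs ι X (h.repr y) = y :=
  (h.repr_unique y).exists.choose_spec.symm

theorem repr_ofCoeffs (c : ℕ →₀ k) : h.repr (ofCoeffs ι X c) = c :=
  (h.repr_unique _).unique (h.ofCoeffs_repr _).symm rfl

theorem repr_injective : Function.Injective h.repr :=
  Function.LeftInverse.injective h.ofCoeffs_repr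

theorem repr_zero : h.repr 0 = 0 := by
  simpa using h.repr_ofCoeffs 0

theorem repr_iota_mul_X_pow (a : k) (i : ℕ) : h.repr (ι a * X ^ i) = Finsupp.single i a := by
  rw [← ofCoeffs_single, h.repr_ofCoeffs]

theorem repr_iota (a : k) : h.repr (ι a) = Finsupp.single 0 a := by
  simpa using h.repr_iota_mul_X_pow a 0

theorem repr_one : h.repr 1 = Finsupp.single 0 1 := by
  simpa using h.repr_iota 1

theorem mul_eq_ofCoeffs (x y : R) : x * y = ofCoeffs ι X
    (∑ i ∈ (h.repr x).support, ∑ j ∈ (h.repr y).support,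
      Finsupp.single (i + j) (h.repr x i * (σ ^ i) (h.repr y j))) := by
  conv_lhs => rw [← h.ofCoeffs_repr x, ← h.ofCoeffs_repr y, ofCoeffs_apply, ofCoeffs_apply]
  simp only [map_sum, ofCoeffs_single, Finsupp.sum, Finset.sum_mul, Finset.mul_sum]
  rw [Finset.sum_comm]
  refine Finset.sum_congr rfl fun i _ => Finset.sum_congr rfl fun j _ => ?_
  rw [mul_assoc, ← mul_assoc (X ^ i), h.X_pow_mul_iota, map_mul, pow_add]
  simp only [mul_assoc]

theorem repr_mul_apply (x y : R) (n : ℕ) : h.repr (x * y) n =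
    ∑ i ∈ (h.repr x).support, ∑ j ∈ (h.repr y).support,
      if i + j = n then h.repr x i * (σ ^ i) (h.repr y j) else 0 := by
  simp only [h.mul_eq_ofCoeffs x y, h.repr_ofCoeffs, Finsupp.finsetSum_apply,
    Finsupp.single_apply]

theorem repr_iota_mul (c : k) (y : R) (n : ℕ) : h.repr (ι c * y) n = c * h.repr y n := by
  rcases eq_or_ne c 0 with rfl | hc
  · simp [h.repr_zero]
  rw [h.repr_mul_apply, h.repr_iota, Finsupp.support_single _ hc]
  by_cases hn : n ∈ (h.repr y).support
  · simp [Finset.sum_ite_eq', hn]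
  · simp_all

theorem le_of_repr_ne_zero {y : R} {n m : ℕ} (hy : h.degLE y n) (hm : h.repr y m ≠ 0) :
    m ≤ n :=
  not_lt.mp fun hnm => hm (hy m hnm)

theorem le_of_mem_support {y : R} {n i : ℕ} (hy : h.degLE y n) (hi : i ∈ (h.repr y).support) :
    i ≤ n :=
  h.le_of_repr_ne_zero hy (Finsupp.mem_support_iff.mp hi)

theorem degLE_mul {x y : R} {p q : ℕ} (hx : h.degLE x p) (hy : h.degLE y q) :
    h.degLE (x * y) (p + q) := by
  intro n hn
  rw [h.repr_mul_apply]
  refine Finset.sum_eq_zero fun i hi => Finset.sum_eq_zero fun j hj => if_neg ?_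
  have := h.le_of_mem_support hx hi
  have := h.le_of_mem_support hy hj
  omega

theorem repr_mul_add_of_degLE {x y : R} {p q : ℕ} (hx : h.degLE x p) (hy : h.degLE y q) :
    h.repr (x * y) (p + q) = h.repr x p * (σ ^ p) (h.repr y q) := by
  rw [h.repr_mul_apply, Finset.sum_eq_single p, Finset.sum_eq_single q, if_pos rfl]
  · intro j hj hjq
    exact if_neg (by omega)
  · intro hq
    simp [Finsupp.notMem_support_iff.mp hq]
  · intro i hi hip
    refine Finset.sum_eq_zero fun j hj => if_neg ?_
    have := h.le_of_mem_support hx hi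
    have := h.le_of_mem_support hy hj
    omega
  · intro hp
    simp [Finsupp.notMem_support_iff.mp hp]

theorem exists_repr_ne_zero_degLE {y : R} (hy : y ≠ 0) : ∃ n, h.repr y n ≠ 0 ∧ h.degLE y n := by
  have hne : (h.repr y).support.Nonempty := by
    rw [Finsupp.support_nonempty_iff, ← h.repr_zero]
    exact h.repr_injective.ne hy
  refine ⟨_, Finsupp.mem_support_iff.mp ((h.repr y).support.max'_mem hne), fun i hi => ?_⟩
  by_contra hi'
  exact (Finset.le_max' _ i (Finsupp.mem_support_iff.mpr hi')).not_gt hi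

theorem eq_of_repr_ne_zero {y : R} {n m : ℕ} (hn : h.repr y n ≠ 0) (hyn : h.degLE y n)
    (hm : h.repr y m ≠ 0) (hym : h.degLE y m) : n = m :=
  le_antisymm (h.le_of_repr_ne_zero hym hn) (h.le_of_repr_ne_zero hyn hm)

theorem repr_mul_add_ne_zero {x y : R} {p q : ℕ} (hx : h.degLE x p) (hy : h.degLE y q)
    (hxp : h.repr x p ≠ 0) (hyq : h.repr y q ≠ 0) : h.repr (x * y) (p + q) ≠ 0 := by
  rw [h.repr_mul_add_of_degLE hx hy]
  exact mul_ne_zero hxp ((map_ne_zero _).mpr hyq)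

theorem isDomain (h : IsSkewPolyRing k σ R ι X) : IsDomain R := by
  have : Nontrivial R := ⟨⟨1, 0, fun h10 => by
    simpa [h.repr_one, h.repr_zero] using congrArg h.repr h10⟩⟩
  refine @NoZeroDivisors.to_isDomain _ _ this ⟨fun {x y} hxy => ?_⟩
  by_contra! hne
  obtain ⟨p, hxp, hx⟩ := h.exists_repr_ne_zero_degLE hne.1
  obtain ⟨q, hyq, hy⟩ := h.exists_repr_ne_zero_degLE hne.2
  simpa [hxy, h.repr_zero] using h.repr_mul_add_ne_zero hx hy hxp hyq

theorem eq_iota_of_degLE_zero {y : R} (hy : h.degLE y 0) : y = ι (h.repr y 0) := by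
  refine h.repr_injective ?_
  rw [h.repr_iota]
  ext (_ | i)
  · simp
  · simp [hy (i + 1) i.succ_pos]

theorem monicOfDegree_one : h.MonicOfDegree 1 0 := by
  refine ⟨by simp [h.repr_one], fun i hi => ?_⟩
  simp [h.repr_one, hi.ne]

theorem exists_eq_iota_of_isUnit (h : IsSkewPolyRing k σ R ι X) {u : R} (hu : IsUnit u) :
    ∃ c, u = ι c := by
  have := h.isDomain
  obtain ⟨v, huv⟩ := hu.exists_right_inv
  obtain ⟨p, hup, hu⟩ := h.exists_repr_ne_zero_degLE (left_ne_zero_of_mul_eq_one huv)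
  obtain ⟨q, hvq, hv⟩ := h.exists_repr_ne_zero_degLE (right_ne_zero_of_mul_eq_one huv)
  have hpq := h.le_of_repr_ne_zero (huv ▸ h.monicOfDegree_one.2)
    (h.repr_mul_add_ne_zero hu hv hup hvq)
  obtain rfl : p = 0 := by omega
  exact ⟨_, h.eq_iota_of_degLE_zero hu⟩

theorem exists_monicOfDegree_eq_iota_mul {y : R} (hy : y ≠ 0) :
    ∃ c ≠ 0, ∃ y' q, h.MonicOfDegree y' q ∧ y = ι c * y' := by
  obtain ⟨q, hc, hyq⟩ := h.exists_repr_ne_zero_degLE hy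
  refine ⟨h.repr y q, hc, ι (h.repr y q)⁻¹ * y, q, ⟨?_, fun i hi => ?_⟩, ?_⟩
  · rw [h.repr_iota_mul, inv_mul_cancel₀ hc]
  · rw [h.repr_iota_mul, hyq i hi, mul_zero]
  · rw [← mul_assoc, ← map_mul, mul_inv_cancel₀ hc, map_one, one_mul]

variable {h}

theorem MonicOfDegree.ne_zero {y : R} {d : ℕ} (hy : h.MonicOfDegree y d) : y ≠ 0 := by
  rintro rfl
  simpa [h.repr_zero] using hy.1

theorem MonicOfDegree.eq_one {y : R} (hy : h.MonicOfDegree y 0) : y = 1 := by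
  rw [h.eq_iota_of_degLE_zero hy.2, hy.1, map_one]

theorem MonicOfDegree.mul {x y : R} {p q : ℕ} (hx : h.MonicOfDegree x p)
    (hy : h.MonicOfDegree y q) : h.MonicOfDegree (x * y) (p + q) :=
  ⟨by rw [h.repr_mul_add_of_degLE hx.2 hy.2, hx.1, hy.1, map_one, one_mul], h.degLE_mul hx.2 hy.2⟩

theorem MonicOfDegree.of_mul {x y : R} {d q : ℕ} (hxy : h.MonicOfDegree (x * y) d)
    (hy : h.MonicOfDegree y q) : ∃ p, h.MonicOfDegree x p ∧ p + q = d := by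
  have hx0 : x ≠ 0 := by rintro rfl; exact hxy.ne_zero (zero_mul y)
  obtain ⟨p, hxp, hx⟩ := h.exists_repr_ne_zero_degLE hx0
  have htop := h.repr_mul_add_of_degLE hx hy.2
  rw [hy.1, map_one, mul_one] at htop
  have hpq : p + q = d :=
    h.eq_of_repr_ne_zero (htop ▸ hxp) (h.degLE_mul hx hy.2) (hxy.1 ▸ one_ne_zero) hxy.2
  exact ⟨p, ⟨by rw [← htop, hpq, hxy.1], hx⟩, hpq⟩

theorem MonicOfDegree.not_isUnit {y : R} {d : ℕ} (hy : h.MonicOfDegree y d) (hd : d ≠ 0) :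
    ¬IsUnit y := by
  rintro hu
  obtain ⟨c, rfl⟩ := h.exists_eq_iota_of_isUnit hu
  simpa [h.repr_iota, hd] using hy.1

theorem Monic.eq_of_eq_mul {T T' u : R} (hT : h.Monic T) (hT' : h.Monic T') (hu : IsUnit u)
    (e : T = u * T') : T = T' := by
  obtain ⟨c, rfl⟩ := h.exists_eq_iota_of_isUnit hu
  obtain ⟨d, hTd⟩ := hT
  obtain ⟨d', hTd'⟩ := hT'
  have hrepr : ∀ n, h.repr T n = c * h.repr T' n := fun n => by rw [e, h.repr_iota_mul]
  have hc : c ≠ 0 := by rintro rfl; simpa [hrepr] using hTd.1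
  have hd : d' = d := h.eq_of_repr_ne_zero (by simpa [hrepr, hTd'.1] using hc)
    (fun n hn => by rw [hrepr, hTd'.2 n hn, mul_zero]) (hTd.1 ▸ one_ne_zero) hTd.2
  have hc1 : c = 1 := by simpa [hrepr, hTd'.1, ← hd] using hTd.1
  rw [e, hc1, map_one, one_mul]

variable (h)

def monicSubmonoid : Submonoid R where
  carrier := {y | h.Monic y}
  mul_mem' := fun ⟨_, hx⟩ ⟨_, hy⟩ => ⟨_, hx.mul hy⟩
  one_mem' := ⟨0, h.monicOfDegree_one⟩

theorem exists_monic_irreducible_factors {P : R} {d : ℕ} (hP : h.MonicOfDegree P d) :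
    ∃ L : List R, (∀ Q ∈ L, h.Monic Q ∧ Irreducible Q) ∧ L.prod = P := by
  have := h.isDomain
  induction d using Nat.strong_induction_on generalizing P with
  | _ d ih =>
  rcases eq_or_ne d 0 with rfl | hd
  · exact ⟨[], by simp, hP.eq_one.symm⟩
  by_cases hirr : Irreducible P
  · exact ⟨[P], by simpa using ⟨⟨d, hP⟩, hirr⟩, by simp⟩
  obtain ⟨A, B, rfl, hA, hB⟩ : ∃ A B, P = A * B ∧ ¬IsUnit A ∧ ¬IsUnit B := by
    simpa [irreducible_iff, hP.not_isUnit hd] using hirr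
  -- moving the leading coefficient of `B` into `A` makes both factors monic
  obtain ⟨c, hc, B', q, hB', rfl⟩ :=
    h.exists_monicOfDegree_eq_iota_mul (right_ne_zero_of_mul hP.ne_zero)
  rw [← mul_assoc] at hP
  obtain ⟨p, hA', rfl⟩ := hP.of_mul hB'
  have hp : p ≠ 0 := by
    rintro rfl
    exact hA (isUnit_of_mul_isUnit_left (hA'.eq_one ▸ isUnit_one))
  have hq : q ≠ 0 := by
    rintro rfl
    exact hB (by simpa [hB'.eq_one] using (IsUnit.mk0 c hc).map ι)
  obtain ⟨LA, hLA, hLA_prod⟩ := ih p (by omega) hA'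
  obtain ⟨LB, hLB, hLB_prod⟩ := ih q (by omega) hB'
  refine ⟨LA ++ LB, fun Q hQ => ?_, by rw [List.prod_append, hLA_prod, hLB_prod, mul_assoc]⟩
  rcases List.mem_append.mp hQ with hQ | hQ
  exacts [hLA Q hQ, hLB Q hQ]

end IsSkewPolyRing

set_option synthInstance.maxHeartbeats 1000000 in
/-- Let `P ∈ k[X,σ]` be monic étale such that the Jordan form of `φ^r` on
`D_P = k[X,σ]/k[X,σ]P` (as a `k^σ`-linear map) consists of a single Jordan block,
i.e. the characteristic polynomial of `φ^r` is a power of an irreducible polynomial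
over `k^σ` and coincides with its minimal polynomial. Then `P` admits a unique
factorization as a product of monic irreducible skew polynomials. -/
theorem unique_factorization_of_single_jordan_block
    {k R : Type*} [Field k] [Fintype k] [Ring R]
    (σ : k ≃+* k) (r : ℕ) (hr : orderOf σ = r) (ι : k →+* R) (X : R)
    (h : IsSkewPolyRing k σ R ι X) (P : R) (hP : h.Monic P) (hetale : h.repr P 0 ≠ 0)
    (hfin : letI : Module (fixedSubfield σ) (R ⧸ (Ideal.span {P} : Ideal R)) :=
        Module.compHom _ (ι.comp (fixedSubfield σ).subtype)
      Module.Finite (fixedSubfield σ) (R ⧸ (Ideal.span {P} : Ideal R))) :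
    letI : Module (fixedSubfield σ) (R ⧸ (Ideal.span {P} : Ideal R)) :=
        Module.compHom _ (ι.comp (fixedSubfield σ).subtype)
    haveI := hfin
    ∀ ψ : (R ⧸ (Ideal.span {P} : Ideal R)) →ₗ[fixedSubfield σ]
        (R ⧸ (Ideal.span {P} : Ideal R)),
      (∀ x : R, ψ (Submodule.Quotient.mk x) = Submodule.Quotient.mk ((X ^ r) * x)) →
      (∃ (g : Polynomial (fixedSubfield σ)) (a : ℕ), Irreducible g ∧
        LinearMap.charpoly ψ = g ^ a ∧
        minpoly (fixedSubfield σ) ψ = LinearMap.charpoly ψ) →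
      ∃! L : List R, (∀ Q ∈ L, h.Monic Q ∧ Irreducible Q) ∧ L.prod = P := by
  let : Module (fixedSubfield σ) (R ⧸ (Ideal.span {P} : Ideal R)) :=
    Module.compHom _ (ι.comp (fixedSubfield σ).subtype)
  have : Module.Finite (fixedSubfield σ) (R ⧸ (Ideal.span {P} : Ideal R)) := hfin
  intro ψ hψ ⟨g, a, hg, hchar, hmin⟩
  let : Module (fixedSubfield σ) R := Module.compHom R (ι.comp (fixedSubfield σ).subtype)
  have : IsScalarTower (fixedSubfield σ) R (R ⧸ (Ideal.span {P} : Ideal R)) :=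
    ⟨fun f x m => mul_smul (ι f) x m⟩
  have hψ' (m : R ⧸ (Ideal.span {P} : Ideal R)) : ψ m = X ^ r • m :=
    Submodule.Quotient.induction_on _ m hψ
  have htotal (T T' : R) (hT : ∃ C, P = C * T) (hT' : ∃ C, P = C * T') :
      (∃ A, T = A * T') ∨ ∃ A, T' = A * T := by
    obtain ⟨C, hC⟩ := hT
    obtain ⟨C', hC'⟩ := hT'
    exact (Submodule.le_total_of_charpoly_eq_pow ψ _ hψ' hg hchar hmin _ _).imp
      (exists_eq_mul_of_span_singleton_mk_le hC') (exists_eq_mul_of_span_singleton_mk_le hC)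
  have := h.isDomain
  obtain ⟨d, hPd⟩ := hP
  obtain ⟨L, hL, hLP⟩ := h.exists_monic_irreducible_factors hPd
  refine ⟨L, ⟨hL, hLP⟩, fun L' ⟨hL', hL'P⟩ => ?_⟩
  exact (List.eq_of_prod_eq_of_rightDvd_total (S := h.monicSubmonoid)
    (fun T hT T' hT' u hu e => hT.eq_of_eq_mul hT' hu e) hPd.ne_zero htotal hL hL' hLP hL'P).symm
end

section
/- For n ≥ 0 let τ_n : k[X,σ]_{≤n} → k[X,σ^{-1}]_{≤n} be the k-linear bijection sending Σ a_i X^i (degree ≤ n) to Σ a_{n-i} X^i. For P of degree ≤ n and Q of degree ≤ m, one has τ_n(P) · τ_m(Q^{(n)}) = τ_{n+m}(PQ), where Q^{(n)} is Q with σ^n applied to each coefficient and the left product is computed in k[X,σ^{-1}]. -/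
namespace IsSkewPolyRing

variable {k : Type*} [Field k] {σ : k ≃+* k} {R : Type*} [Ring R] {ι : k →+* R} {X : R}

theorem repr_spec' (h : IsSkewPolyRing k σ R ι X) (y : R) :
    y = (h.repr y).sum fun i a => ι a * X ^ i :=
  (h.repr_unique y).exists.choose_spec

theorem repr_eq' (h : IsSkewPolyRing k σ R ι X) {y : R} {c : ℕ →₀ k}
    (hc : y = c.sum fun i a => ι a * X ^ i) : h.repr y = c := by
  obtain ⟨c₀, _, hu⟩ := h.repr_unique y
  rw [hu _ (h.repr_spec' y), hu _ hc]

theorem X_pow_mul' (h : IsSkewPolyRing k σ R ι X) (i : ℕ) :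
    ∀ a : k, X ^ i * ι a = ι ((σ ^ i) a) * X ^ i := by
  induction i with
  | zero => intro a; simp
  | succ i ih =>
    intro a
    have h1 : ((σ ^ (i+1)) a) = (σ ^ i) (σ a) := by rw [pow_succ σ]; rfl
    rw [pow_succ, mul_assoc, h.X_mul, ← mul_assoc, ih, h1, mul_assoc]

theorem eq_sum_range' (h : IsSkewPolyRing k σ R ι X) {y : R} {n : ℕ} (hy : h.degLE y n) :
    y = ∑ i ∈ Finset.range (n+1), ι (h.repr y i) * X ^ i := by
  conv_lhs => rw [h.repr_spec' y]
  apply Finsupp.sum_of_support_subset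
  · intro i hi
    simp only [Finset.mem_range, Finsupp.mem_support_iff] at *
    by_contra hc
    exact hi (hy i (by omega))
  · intro i _; simp

end IsSkewPolyRing

/-- For `n ≥ 0` let `τ_n : k[X,σ]_{≤n} → k[X,σ⁻¹]_{≤n}` be the `k`-linear bijection
sending `Σ aᵢ Xⁱ` (degree ≤ n) to `Σ a_{n-i} Xⁱ`. For `P` of degree ≤ `n` and `Q` of
degree ≤ `m`, one has `τ_n(P) · τ_m(Q^{(n)}) = τ_{n+m}(PQ)`, where `Q^{(n)}` is `Q`
with `σ^n` applied to each coefficient and the left product is computed in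
`k[X,σ⁻¹]`. -/

theorem reciprocal_mul {k R R' : Type*} [Field k] [Fintype k] [Ring R] [Ring R']
    (σ : k ≃+* k) (ι : k →+* R) (X : R) (ι' : k →+* R') (X' : R')
    (h : IsSkewPolyRing k σ R ι X) (h' : IsSkewPolyRing k σ.symm R' ι' X')
    (n m : ℕ) (P Q : R) (hP : h.degLE P n) (hQ : h.degLE Q m) :
    (∑ i ∈ Finset.range (n + 1), ι' (h.repr P (n - i)) * X' ^ i) *
      (∑ i ∈ Finset.range (m + 1), ι' ((σ ^ n) (h.repr Q (m - i))) * X' ^ i) =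
    ∑ i ∈ Finset.range (n + m + 1), ι' (h.repr (P * Q) (n + m - i)) * X' ^ i := by
  have mul_ap : ∀ (f g : k ≃+* k) (y : k), (f * g) y = f (g y) := fun _ _ _ => rfl
  have key : ∀ j (y : k), (σ.symm ^ j) ((σ ^ j) y) = y := by
    intro j
    induction j with
    | zero => intro y; rfl
    | succ j ih =>
      intro y
      rw [pow_succ σ, pow_succ' σ.symm, mul_ap, mul_ap, ih, RingEquiv.symm_apply_apply]
  have cancel : ∀ i : ℕ, i ≤ n → ∀ y : k, (σ.symm ^ i) ((σ ^ n) y) = (σ ^ (n - i)) y := by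
    intro i hi y
    conv_lhs => rw [show n = i + (n - i) by omega, pow_add, mul_ap, key]
  -- compute repr (P * Q)
  have hPQ : h.repr (P * Q) = ∑ u ∈ Finset.range (n+1), ∑ v ∈ Finset.range (m+1),
      Finsupp.single (u+v) (h.repr P u * (σ ^ u) (h.repr Q v)) := by
    apply h.repr_eq'
    conv_lhs => rw [h.eq_sum_range' hP, h.eq_sum_range' hQ]
    rw [Finset.sum_mul_sum,
      ← Finsupp.sum_finset_sum_index (fun i => by simp) (fun i b₁ b₂ => by simp [add_mul])]
    refine Finset.sum_congr rfl fun u _ => ?_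
    rw [← Finsupp.sum_finset_sum_index (fun i => by simp) (fun i b₁ b₂ => by simp [add_mul])]
    refine Finset.sum_congr rfl fun v _ => ?_
    rw [Finsupp.sum_single_index (by simp)]
    rw [map_mul, mul_assoc, ← mul_assoc (X ^ u), h.X_pow_mul', pow_add,
      mul_assoc, ← mul_assoc]
  -- RHS computation
  have rhs_eq : (∑ i ∈ Finset.range (n + m + 1), ι' (h.repr (P * Q) (n + m - i)) * X' ^ i) =
      ∑ u ∈ Finset.range (n+1), ∑ v ∈ Finset.range (m+1),
        ι' (h.repr P u * (σ ^ u) (h.repr Q v)) * X' ^ ((n - u) + (m - v)) := by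
    simp only [hPQ, Finsupp.finset_sum_apply, Finsupp.single_apply, map_sum, Finset.sum_mul]
    rw [Finset.sum_comm]
    refine Finset.sum_congr rfl fun u hu => ?_
    rw [Finset.sum_comm]
    refine Finset.sum_congr rfl fun v hv => ?_
    simp only [Finset.mem_range] at hu hv
    calc ∑ t ∈ Finset.range (n + m + 1),
          ι' (if u + v = n + m - t then h.repr P u * (σ ^ u) (h.repr Q v) else 0) * X' ^ t
        = ∑ t ∈ Finset.range (n + m + 1),
          (if t = (n - u) + (m - v) then
            ι' (h.repr P u * (σ ^ u) (h.repr Q v)) * X' ^ t else 0) := by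
          refine Finset.sum_congr rfl fun t ht => ?_
          simp only [Finset.mem_range] at ht
          by_cases hc : u + v = n + m - t
          · rw [if_pos hc, if_pos (by omega)]
          · rw [if_neg hc, if_neg (by omega), map_zero, zero_mul]
      _ = ι' (h.repr P u * (σ ^ u) (h.repr Q v)) * X' ^ ((n - u) + (m - v)) := by
          rw [Finset.sum_ite_eq' (Finset.range (n+m+1))]
          rw [if_pos (Finset.mem_range.mpr (by omega))]
  rw [rhs_eq, Finset.sum_mul_sum]
  -- LHS termwise
  have lhs_term : ∀ i ∈ Finset.range (n+1), ∀ j ∈ Finset.range (m+1),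
      (ι' (h.repr P (n - i)) * X' ^ i) * (ι' ((σ ^ n) (h.repr Q (m - j))) * X' ^ j) =
      ι' (h.repr P (n - i) * (σ ^ (n - i)) (h.repr Q (m - j))) * X' ^ (i + j) := by
    intro i hi j hj
    simp only [Finset.mem_range] at hi hj
    rw [mul_assoc, ← mul_assoc (X' ^ i), h'.X_pow_mul', cancel i (by omega),
      map_mul, pow_add, mul_assoc, ← mul_assoc]
  rw [Finset.sum_congr rfl fun i hi => Finset.sum_congr rfl fun j hj => lhs_term i hi j hj]
  -- reflect indices on the RHS
  rw [← Finset.sum_range_reflect (fun u => ∑ v ∈ Finset.range (m+1),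
      ι' (h.repr P u * (σ ^ u) (h.repr Q v)) * X' ^ ((n - u) + (m - v))) (n+1)]
  refine Finset.sum_congr rfl fun i hi => ?_
  rw [← Finset.sum_range_reflect (fun v =>
      ι' (h.repr P (n + 1 - 1 - i) * (σ ^ (n + 1 - 1 - i)) (h.repr Q v)) *
        X' ^ ((n - (n + 1 - 1 - i)) + (m - v))) (m+1)]
  refine Finset.sum_congr rfl fun j hj => ?_
  simp only [Finset.mem_range] at hi hj
  simp only [Nat.add_sub_cancel]
  rw [show (n - (n - i)) + (m - (m - j)) = i + j by omega]
end
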